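/- Let G be a connected 3-uniform hypergraph on {1,…,n} with at least one edge. Then G is tripartite if and only if the Laplacian tensor D−A has an eigenvector associated with the eigenvalue zero that is not a constant vector, i.e., there exists a nonzero x ∈ ℂ^n with ((D−A) x²)_i = 0 for all i and x_a ≠ x_b for some a, b. -/

import Mathlib

open Finset

/-- Degree of vertex `i` in the hypergraph with edge set `E`. -/
def hdeg {n : ℕ} (E : Finset (Finset (Fin n))) (i : Fin n) : ℕ :=
  (E.filter fun e => i ∈ e).card

/-- Laplacian tensor action `((D - A) x^{k-1})_i` over ℂ. -/
noncomputable def lapC (k : ℕ) {n : ℕ} (E : Finset (Finset (Fin n)))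
    (x : Fin n → ℂ) (i : Fin n) : ℂ :=
  (hdeg E i : ℂ) * x i ^ (k - 1) -
    ∑ e ∈ E.filter (fun e => i ∈ e), ∏ j ∈ e.erase i, x j

/-- Signless Laplacian tensor action `((D + A) x^{k-1})_i` over ℂ. -/
noncomputable def slapC (k : ℕ) {n : ℕ} (E : Finset (Finset (Fin n)))
    (x : Fin n → ℂ) (i : Fin n) : ℂ :=
  (hdeg E i : ℂ) * x i ^ (k - 1) +
    ∑ e ∈ E.filter (fun e => i ∈ e), ∏ j ∈ e.erase i, x j

/-- Laplacian tensor action `((D - A) x^{k-1})_i` over ℝ. -/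
noncomputable def lapR (k : ℕ) {n : ℕ} (E : Finset (Finset (Fin n)))
    (x : Fin n → ℝ) (i : Fin n) : ℝ :=
  (hdeg E i : ℝ) * x i ^ (k - 1) -
    ∑ e ∈ E.filter (fun e => i ∈ e), ∏ j ∈ e.erase i, x j

/-- Signless Laplacian tensor action `((D + A) x^{k-1})_i` over ℝ. -/
noncomputable def slapR (k : ℕ) {n : ℕ} (E : Finset (Finset (Fin n)))
    (x : Fin n → ℝ) (i : Fin n) : ℝ :=
  (hdeg E i : ℝ) * x i ^ (k - 1) +
    ∑ e ∈ E.filter (fun e => i ∈ e), ∏ j ∈ e.erase i, x j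

/-- The hypergraph with edge set `E` is connected: every pair of distinct vertices is
joined by a chain of edges with consecutive edges intersecting. -/
def HConnected {n : ℕ} (E : Finset (Finset (Fin n))) : Prop :=
  ∀ i j : Fin n, i ≠ j → ∃ m : ℕ, ∃ es : Fin (m + 1) → Finset (Fin n),
    (∀ r, es r ∈ E) ∧ i ∈ es 0 ∧ j ∈ es (Fin.last m) ∧
    ∀ r : Fin m, (es r.castSucc ∩ es r.succ).Nonempty

/-! At a vertex `i` where `‖x i‖` is maximal, the eigenequation says that the average of the
`d_i` numbers `∏_{j ∈ e \ i} x j` equals `x i ^ 2`, while each has modulus at most `‖x i‖ ^ 2`;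
by the equality case of the triangle inequality all of them equal `x i ^ 2`. Maximality of the
modulus therefore spreads along edges, so by connectivity it holds everywhere, and then every
edge `e` and `i ∈ e` satisfy `x i ^ 3 = ∏_{j ∈ e} x j`. Hence `x ^ 3` is constant, `x` takes at
most three values, and on each edge `x` is either constant or takes three distinct values. A
non-constant `x` has an edge of the second kind, and the fibres of `x` are the three parts.
Conversely, the vector equal to `1`, `ω`, `ω ^ 2` on the three parts has product `1` on every
edge, which makes it a null vector. -/

def IsTripartite {n : ℕ} (E : Finset (Finset (Fin n))) : Prop :=
  ∃ V1 V2 V3 : Finset (Fin n), V1.Nonempty ∧ V2.Nonempty ∧ V3.Nonempty ∧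
    Disjoint V1 V2 ∧ Disjoint V1 V3 ∧ Disjoint V2 V3 ∧
    V1 ∪ V2 ∪ V3 = Finset.univ ∧
    ∀ e ∈ E, (e ⊆ V1 ∨ e ⊆ V2 ∨ e ⊆ V3) ∨
      ((e ∩ V1).Nonempty ∧ (e ∩ V2).Nonempty ∧ (e ∩ V3).Nonempty)

open scoped ComplexOrder in
lemma Complex.eq_of_sum_eq_card_mul_of_norm_le {ι : Type*} {s : Finset ι} {f : ι → ℂ} {w : ℂ}
    (hsum : ∑ a ∈ s, f a = s.card * w) (hle : ∀ a ∈ s, ‖f a‖ ≤ ‖w‖) :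
    ∀ a ∈ s, f a = w := by
  rcases eq_or_ne w 0 with rfl | hw
  · intro a ha
    simpa using hle a ha
  set g : ι → ℂ := fun a => f a / w
  have hg : ∀ a ∈ s, ‖g a‖ ≤ 1 := fun a ha => by
    simpa [g, norm_div, div_le_one (norm_pos_iff.2 hw)] using hle a ha
  have hre_le : ∀ a ∈ s, (g a).re ≤ 1 := fun a ha => (re_le_norm _).trans (hg a ha)
  have hre_sum : ∑ a ∈ s, (g a).re = ∑ _a ∈ s, (1 : ℝ) := by
    rw [← re_sum, ← sum_div, hsum, mul_div_cancel_right₀ _ hw]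
    simp
  have hre := (sum_eq_sum_iff_of_le hre_le).1 hre_sum
  intro a ha
  have hnonneg : 0 ≤ g a :=
    re_eq_norm.1 (le_antisymm (re_le_norm _) ((hg a ha).trans (hre a ha).ge))
  have hga : g a = 1 :=
    Complex.ext (by simpa using hre a ha) (by simpa using (nonneg_iff.1 hnonneg).2.symm)
  exact (div_eq_one_iff_eq hw).1 hga

lemma eq_and_eq_or_pairwise_ne_of_sq_eq_mul {R : Type*} [CommRing R] [IsDomain R] {u v w : R}
    (hu0 : u ≠ 0) (hv0 : v ≠ 0) (hu : u ^ 2 = v * w) (hv : v ^ 2 = u * w) :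
    (u = v ∧ v = w) ∨ (u ≠ v ∧ v ≠ w ∧ u ≠ w) := by
  rcases eq_or_ne u v with rfl | huv
  · exact Or.inl ⟨rfl, mul_left_cancel₀ hu0 (by rw [← sq, hu])⟩
  refine Or.inr ⟨huv, fun hvw => huv ?_, fun huw => huv ?_⟩
  · subst hvw
    exact (mul_right_cancel₀ hv0 (by rw [← sq, hv])).symm
  · subst huw
    exact mul_right_cancel₀ hu0 (by rw [← sq, hu, mul_comm])

lemma forall_eq_or_card_image_eq_three {α R : Type*} [DecidableEq α] [CommRing R] [IsDomain R]
    [DecidableEq R] {e : Finset α} (he : e.card = 3) {x : α → R} (hx0 : ∀ i ∈ e, x i ≠ 0)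
    (hcube : ∀ i ∈ e, x i ^ 3 = ∏ j ∈ e, x j) :
    (∀ i ∈ e, ∀ j ∈ e, x i = x j) ∨ (e.image x).card = 3 := by
  obtain ⟨p, q, r, hpq, hpr, hqr, rfl⟩ := card_eq_three.1 he
  have hprod : ∏ j ∈ {p, q, r}, x j = x p * (x q * x r) := by
    rw [prod_insert (by simp [hpq, hpr]), prod_pair hqr]
  simp only [mem_insert, mem_singleton, forall_eq_or_imp, forall_eq, hprod] at hx0 hcube
  obtain ⟨hp0, hq0, -⟩ := hx0
  obtain ⟨hp, hq, -⟩ := hcube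
  have hp' : x p ^ 2 = x q * x r := mul_left_cancel₀ hp0 (by linear_combination hp)
  have hq' : x q ^ 2 = x p * x r := mul_left_cancel₀ hq0 (by linear_combination hq)
  rcases eq_and_eq_or_pairwise_ne_of_sq_eq_mul hp0 hq0 hp' hq' with ⟨h₁, h₂⟩ | ⟨h₁, h₂, h₃⟩
  · left
    simp [h₁, h₂]
  · right
    rw [image_insert, image_insert, image_singleton]
    exact card_eq_three.2 ⟨_, _, _, h₁, h₃, h₂, rfl⟩

section Laplacian

variable {k n : ℕ} {E : Finset (Finset (Fin n))} {x : Fin n → ℂ}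

lemma lapC_eq_zero_of_forall_prod_erase {i : Fin n}
    (h : ∀ e ∈ E, i ∈ e → ∏ j ∈ e.erase i, x j = x i ^ (k - 1)) : lapC k E x i = 0 := by
  unfold lapC hdeg
  rw [sum_congr rfl fun e he => h e (mem_filter.1 he).1 (mem_filter.1 he).2, sum_const,
    nsmul_eq_mul, sub_self]

variable (hE : ∀ e ∈ E, e.card = k) {i : Fin n} (hx : lapC k E x i = 0)
  (hmax : ∀ j, ‖x j‖ ≤ ‖x i‖) {e : Finset (Fin n)} (he : e ∈ E) (hie : i ∈ e)
include hE hx hmax he hie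

lemma prod_erase_eq_pow_of_forall_norm_le : ∏ j ∈ e.erase i, x j = x i ^ (k - 1) := by
  refine Complex.eq_of_sum_eq_card_mul_of_norm_le (sub_eq_zero.1 hx).symm ?_ e
    (mem_filter.2 ⟨he, hie⟩)
  intro e' he'
  obtain ⟨he'E, hie'⟩ := mem_filter.1 he'
  rw [norm_prod, norm_pow]
  calc ∏ j ∈ e'.erase i, ‖x j‖ ≤ ∏ _j ∈ e'.erase i, ‖x i‖ :=
        prod_le_prod (fun j _ => norm_nonneg _) fun j _ => hmax j
    _ = ‖x i‖ ^ (k - 1) := by rw [prod_const, card_erase_of_mem hie', hE e' he'E]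

lemma norm_eq_of_forall_norm_le {j : Fin n} (hje : j ∈ e) : ‖x j‖ = ‖x i‖ := by
  rcases eq_or_ne j i with rfl | hji
  · rfl
  have hje' : j ∈ e.erase i := mem_erase.2 ⟨hji, hje⟩
  set c := ((e.erase i).erase j).card
  have hc : c + 1 = k - 1 := by
    rw [card_erase_add_one hje', card_erase_of_mem hie, hE e he]
  have hsplit : ‖x j‖ * ∏ l ∈ (e.erase i).erase j, ‖x l‖ = ‖x i‖ * ‖x i‖ ^ c := by
    rw [mul_prod_erase _ (fun l => ‖x l‖) hje', ← norm_prod,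
      prod_erase_eq_pow_of_forall_norm_le hE hx hmax he hie, norm_pow, ← pow_succ', hc]
  have hrest : ∏ l ∈ (e.erase i).erase j, ‖x l‖ ≤ ‖x i‖ ^ c := by
    simpa only [prod_const] using prod_le_prod (fun l _ => norm_nonneg _) fun l _ => hmax l
  rcases (norm_nonneg (x i)).eq_or_lt with hzero | hpos
  · exact le_antisymm (hzero ▸ hmax j) (hzero ▸ norm_nonneg _)
  have := pow_pos hpos c
  have := prod_nonneg fun l (_ : l ∈ (e.erase i).erase j) => norm_nonneg (x l)
  nlinarith [hmax j, norm_nonneg (x j)]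

end Laplacian

section Hypergraph

variable {n : ℕ} {E : Finset (Finset (Fin n))}

lemma HConnected.forall_of_edge_closed (hconn : HConnected E) {P : Fin n → Prop}
    (hP : ∀ e ∈ E, ∀ i ∈ e, P i → ∀ j ∈ e, P j) {i : Fin n} (hi : P i) (j : Fin n) : P j := by
  rcases eq_or_ne i j with rfl | hij
  · exact hi
  obtain ⟨m, es, hes, hi0, hjm, hinter⟩ := hconn i j hij
  have hchain : ∀ r, ∀ l ∈ es r, P l := by
    refine Fin.induction (hP _ (hes 0) i hi0 hi) fun r ih => ?_
    obtain ⟨v, hv⟩ := hinter r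
    exact hP _ (hes _) v (mem_inter.1 hv).2 (ih v (mem_inter.1 hv).1)
  exact hchain _ j hjm

lemma HConnected.apply_eq_of_forall_edge (hconn : HConnected E) {β : Type*} {f : Fin n → β}
    (hf : ∀ e ∈ E, ∀ i ∈ e, ∀ j ∈ e, f i = f j) (i j : Fin n) : f i = f j :=
  hconn.forall_of_edge_closed (P := fun l => f i = f l)
    (fun e he l hl hil l' hl' => hil.trans (hf e he l hl l' hl')) rfl j

lemma HConnected.prod_erase_eq_pow {k : ℕ} (hconn : HConnected E) (hE : ∀ e ∈ E, e.card = k)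
    {x : Fin n → ℂ} (hx : ∀ i, lapC k E x i = 0) :
    ∀ e ∈ E, ∀ i ∈ e, ∏ j ∈ e.erase i, x j = x i ^ (k - 1) := by
  intro e he i hie
  have : Nonempty (Fin n) := ⟨i⟩
  obtain ⟨i₀, hi₀⟩ := Finite.exists_max fun j => ‖x j‖
  have hnorm : ∀ j, ‖x j‖ = ‖x i₀‖ :=
    hconn.forall_of_edge_closed (P := fun j => ‖x j‖ = ‖x i₀‖)
      (fun e' he' l hl hl₀ j hj => (norm_eq_of_forall_norm_le hE (hx l)
        (fun l' => hl₀ ▸ hi₀ l') he' hl hj).trans hl₀) rfl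
  exact prod_erase_eq_pow_of_forall_norm_le hE (hx i) (fun l => (hnorm i).symm ▸ hi₀ l) he hie

lemma isTripartite_of_image_eq {β : Type*} [DecidableEq β]
    (f : Fin n → β) (hf : (univ.image f).card = 3)
    (hE : ∀ e ∈ E, (∀ i ∈ e, ∀ j ∈ e, f i = f j) ∨ e.image f = univ.image f) :
    IsTripartite E := by
  obtain ⟨t₁, t₂, t₃, h₁₂, h₁₃, h₂₃, himg⟩ := card_eq_three.1 hf
  have hval : ∀ a, f a = t₁ ∨ f a = t₂ ∨ f a = t₃ := fun a => by
    simpa [himg] using mem_image_of_mem f (mem_univ a)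
  have hfib : ∀ {t}, t ∈ ({t₁, t₂, t₃} : Finset β) → (univ.filter (f · = t)).Nonempty :=
    fun {t} ht => by
      obtain ⟨a, ha⟩ : ∃ a, f a = t := by simpa [← himg] using ht
      exact ⟨a, by simpa using ha⟩
  refine ⟨univ.filter (f · = t₁), univ.filter (f · = t₂), univ.filter (f · = t₃),
    hfib (by simp), hfib (by simp), hfib (by simp),
    disjoint_filter.2 fun a _ h h' => h₁₂ (h.symm.trans h'),
    disjoint_filter.2 fun a _ h h' => h₁₃ (h.symm.trans h'),
    disjoint_filter.2 fun a _ h h' => h₂₃ (h.symm.trans h'),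
    by ext a; simpa [or_assoc] using hval a, fun e he => ?_⟩
  rcases hE e he with hmono | hall
  · left
    rcases e.eq_empty_or_nonempty with rfl | ⟨a, ha⟩
    · simp
    have hsub : ∀ {t}, f a = t → e ⊆ univ.filter (f · = t) := fun hat b hb => by
      simpa [← hat] using hmono b hb a ha
    rcases hval a with h | h | h
    exacts [Or.inl (hsub h), Or.inr (Or.inl (hsub h)), Or.inr (Or.inr (hsub h))]
  · right
    have hmeet : ∀ {t}, t ∈ ({t₁, t₂, t₃} : Finset β) → (e ∩ univ.filter (f · = t)).Nonempty :=
      fun ht => by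
        obtain ⟨a, ha, hat⟩ := mem_image.1 (hall ▸ himg ▸ ht)
        exact ⟨a, mem_inter.2 ⟨ha, by simpa using hat⟩⟩
    exact ⟨hmeet (by simp), hmeet (by simp), hmeet (by simp)⟩

end Hypergraph

section Uniform3

variable {n : ℕ} {E : Finset (Finset (Fin n))} (hE : ∀ e ∈ E, e.card = 3)
include hE

lemma exists_lapC_eq_zero_of_isTripartite (h : IsTripartite E) :
    ∃ x : Fin n → ℂ, x ≠ 0 ∧ (∀ i, lapC 3 E x i = 0) ∧ ∃ a b : Fin n, x a ≠ x b := by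
  obtain ⟨V₁, V₂, V₃, ⟨a, ha⟩, ⟨b, hb⟩, -, h₁₂, h₁₃, h₂₃, -, hedge⟩ := h
  obtain ⟨ω, hω⟩ : ∃ ω : ℂ, IsPrimitiveRoot ω 3 := ⟨_, Complex.isPrimitiveRoot_exp 3 (by norm_num)⟩
  have hω3 : ω ^ 3 = 1 := hω.pow_eq_one
  have hω23 : (ω ^ 2) ^ 3 = 1 := by rw [← pow_mul, mul_comm, pow_mul, hω3, one_pow]
  let x : Fin n → ℂ := fun i => if i ∈ V₁ then 1 else if i ∈ V₂ then ω else ω ^ 2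
  have hx₁ : ∀ i ∈ V₁, x i = 1 := fun i hi => if_pos hi
  have hx₂ : ∀ i ∈ V₂, x i = ω := fun i hi => by simp [x, hi, disjoint_right.1 h₁₂ hi]
  have hx₃ : ∀ i ∈ V₃, x i = ω ^ 2 := fun i hi => by
    simp [x, disjoint_right.1 h₁₃ hi, disjoint_right.1 h₂₃ hi]
  have hcube : ∀ i, x i ^ 3 = 1 := fun i => by
    simp only [x]
    split_ifs
    exacts [one_pow 3, hω3, hω23]
  have hprod : ∀ e ∈ E, ∏ j ∈ e, x j = 1 := by
    intro e he
    have hmono : ∀ {V : Finset (Fin n)} {t : ℂ}, t ^ 3 = 1 → (∀ i ∈ V, x i = t) → e ⊆ V →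
        ∏ j ∈ e, x j = 1 := fun ht hV heV => by
      rw [prod_congr rfl fun j hj => hV j (heV hj), prod_const, hE e he, ht]
    rcases hedge e he with (h | h | h) | ⟨⟨z₁, hz₁⟩, ⟨z₂, hz₂⟩, ⟨z₃, hz₃⟩⟩
    · exact hmono (one_pow 3) hx₁ h
    · exact hmono hω3 hx₂ h
    · exact hmono hω23 hx₃ h
    rw [mem_inter] at hz₁ hz₂ hz₃
    have h₁₂' : z₁ ≠ z₂ := fun h => disjoint_left.1 h₁₂ hz₁.2 (h ▸ hz₂.2)
    have h₁₃' : z₁ ≠ z₃ := fun h => disjoint_left.1 h₁₃ hz₁.2 (h ▸ hz₃.2)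
    have h₂₃' : z₂ ≠ z₃ := fun h => disjoint_left.1 h₂₃ hz₂.2 (h ▸ hz₃.2)
    have he_eq : e = {z₁, z₂, z₃} := (eq_of_subset_of_card_le
      (by simp [insert_subset_iff, hz₁.1, hz₂.1, hz₃.1])
      (by rw [hE e he, card_eq_three.2 ⟨_, _, _, h₁₂', h₁₃', h₂₃', rfl⟩])).symm
    rw [he_eq, prod_insert (by simp [h₁₂', h₁₃']), prod_pair h₂₃', hx₁ _ hz₁.2, hx₂ _ hz₂.2,
      hx₃ _ hz₃.2, one_mul, ← pow_succ', hω3]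
  refine ⟨x, fun h0 => by simpa [hx₁ a ha] using congrFun h0 a,
    fun i => lapC_eq_zero_of_forall_prod_erase fun e he hie => ?_, a, b, ?_⟩
  · have hxi : x i ≠ 0 := fun h0 => by simpa [h0] using hcube i
    refine mul_left_cancel₀ hxi ?_
    rw [mul_prod_erase e x hie, hprod e he, ← pow_succ', hcube]
  · rw [hx₁ a ha, hx₂ b hb]
    exact fun h => hω.ne_one (by norm_num) h.symm

lemma HConnected.isTripartite_of_lapC_eq_zero (hconn : HConnected E) {x : Fin n → ℂ}
    (hx : ∀ i, lapC 3 E x i = 0) (hx0 : x ≠ 0) {a b : Fin n} (hab : x a ≠ x b) :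
    IsTripartite E := by
  classical
  have hcube : ∀ e ∈ E, ∀ i ∈ e, x i ^ 3 = ∏ j ∈ e, x j := fun e he i hi => by
    rw [← mul_prod_erase e x hi, hconn.prod_erase_eq_pow hE hx e he i hi]
    ring
  have hcube_eq : ∀ j, x j ^ 3 = x a ^ 3 := fun j =>
    hconn.apply_eq_of_forall_edge (f := (x · ^ 3))
      (fun e he i hi j hj => (hcube e he i hi).trans (hcube e he j hj).symm) j a
  have hne : ∀ j, x j ≠ 0 := by
    obtain ⟨l, hl⟩ := Function.ne_iff.1 hx0
    intro j hj
    refine hl (pow_eq_zero_iff three_ne_zero |>.1 ?_)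
    rw [hcube_eq l, ← hcube_eq j, hj, zero_pow three_ne_zero]
  have hedge : ∀ e ∈ E, (∀ i ∈ e, ∀ j ∈ e, x i = x j) ∨ (e.image x).card = 3 := fun e he =>
    forall_eq_or_card_image_eq_three (hE e he) (fun i _ => hne i) (hcube e he)
  obtain ⟨e₀, he₀, hcard₀⟩ : ∃ e ∈ E, (e.image x).card = 3 := by
    by_contra! h
    exact hab (hconn.apply_eq_of_forall_edge (fun e he => (hedge e he).resolve_right (h e he)) a b)
  have hle : (univ.image x).card ≤ 3 := calc
    (univ.image x).card ≤ (Polynomial.nthRootsFinset 3 (x a ^ 3)).card := card_le_card <|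
        image_subset_iff.2 fun j _ => (Polynomial.mem_nthRootsFinset (by norm_num) _).2 (hcube_eq j)
    _ ≤ 3 := (Multiset.toFinset_card_le _).trans (Polynomial.card_nthRoots 3 _)
  have himg : (univ.image x).card = 3 :=
    le_antisymm hle (hcard₀ ▸ card_le_card (image_subset_image (subset_univ e₀)))
  exact isTripartite_of_image_eq x himg fun e he => (hedge e he).imp_right fun h =>
    eq_of_subset_of_card_le (image_subset_image (subset_univ e)) (himg.trans h.symm).le

end Uniform3

theorem stmt_18_general {n : ℕ}
    (E : Finset (Finset (Fin n))) (hE : ∀ e ∈ E, e.card = 3)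
    (hconn : HConnected E) :
    (∃ V1 V2 V3 : Finset (Fin n), V1.Nonempty ∧ V2.Nonempty ∧ V3.Nonempty ∧
        Disjoint V1 V2 ∧ Disjoint V1 V3 ∧ Disjoint V2 V3 ∧
        V1 ∪ V2 ∪ V3 = Finset.univ ∧
        ∀ e ∈ E, (e ⊆ V1 ∨ e ⊆ V2 ∨ e ⊆ V3) ∨
          ((e ∩ V1).Nonempty ∧ (e ∩ V2).Nonempty ∧ (e ∩ V3).Nonempty)) ↔
      ∃ x : Fin n → ℂ, x ≠ 0 ∧ (∀ i, lapC 3 E x i = 0) ∧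
        ∃ a b : Fin n, x a ≠ x b := by
  refine ⟨exists_lapC_eq_zero_of_isTripartite hE, ?_⟩
  rintro ⟨x, hx0, hx, a, b, hab⟩
  exact hconn.isTripartite_of_lapC_eq_zero hE hx hx0 hab

theorem stmt_18 {n : ℕ} (hn : 3 ≤ n)
    (E : Finset (Finset (Fin n))) (hE : ∀ e ∈ E, e.card = 3)
    (hconn : HConnected E) (hne : E.Nonempty) :
    (∃ V1 V2 V3 : Finset (Fin n), V1.Nonempty ∧ V2.Nonempty ∧ V3.Nonempty ∧
        Disjoint V1 V2 ∧ Disjoint V1 V3 ∧ Disjoint V2 V3 ∧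
        V1 ∪ V2 ∪ V3 = Finset.univ ∧
        ∀ e ∈ E, (e ⊆ V1 ∨ e ⊆ V2 ∨ e ⊆ V3) ∨
          ((e ∩ V1).Nonempty ∧ (e ∩ V2).Nonempty ∧ (e ∩ V3).Nonempty)) ↔
      ∃ x : Fin n → ℂ, x ≠ 0 ∧ (∀ i, lapC 3 E x i = 0) ∧
        ∃ a b : Fin n, x a ≠ x b :=
  stmt_18_general E hE hconn
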